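/- The unique formal power series g(u) = 1 + \sum_{i\ge 1} g_i u^{-i} satisfying g(u+N) = g(u)(1-u^{-2}) also satisfies the product formula g(u) g(u+1) \cdots g(u+N-1) = (1 - u^{-1})^{-1}. -/

import Mathlib

/-!
Write `P` for the product. Shifting by one turns `P(u)` into `P(u) g(u+N) / g(u) = P(u) (1 - u⁻²)`,
and `(1 - u⁻¹)⁻¹ = u / (u - 1)` satisfies the same functional equation. A solution of
`f(u+1) = f(u) (1 - u⁻²)` is determined by its constant term: if `c u⁻ᵐ` (`m ≥ 1`) is the leading
term of the difference of two solutions, the coefficient of `u⁻⁽ᵐ⁺¹⁾` in the shifted difference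
exceeds the one on the right by `-m c`, so `c = 0`.

The shift by `a` is the substitution `X ↦ X / (1 + a X)`, which makes it a ring endomorphism with
`shift a ∘ shift b = shift (a + b)`.
-/

/- Formal power series in `u⁻¹` are modelled as `PowerSeries ℂ`, with `X = u⁻¹`.
The shift `f(u) ↦ f(u+a)` is defined by re-expansion. -/
noncomputable def shiftPS (a : ℂ) (f : PowerSeries ℂ) : PowerSeries ℂ :=
  PowerSeries.mk fun n =>
    ∑ i ∈ Finset.range (n + 1),
      (PowerSeries.coeff i f) * (-a) ^ (n - i) * ((n - 1).choose (n - i) : ℂ)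

open PowerSeries Finset

theorem PowerSeries.map_inv_of_constantCoeff_ne_zero {k k' F : Type*} [Field k] [Field k']
    [FunLike F k⟦X⟧ k'⟦X⟧] [RingHomClass F k⟦X⟧ k'⟦X⟧] (φ : F) {f : k⟦X⟧}
    (hf : constantCoeff f ≠ 0) : φ f⁻¹ = (φ f)⁻¹ := by
  have hmul : φ f * φ f⁻¹ = 1 := by rw [← map_mul, PowerSeries.mul_inv_cancel f hf, map_one]
  have hφf : constantCoeff (φ f) ≠ 0 :=
    left_ne_zero_of_mul_eq_one (by rw [← map_mul, hmul, map_one])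
  exact (eq_inv_iff_mul_eq_one hφf).2 (by rw [mul_comm, hmul])

theorem PowerSeries.inv_one_add_C_mul_X {k : Type*} [Field k] (a : k) :
    (1 + C a * X : k⟦X⟧)⁻¹ = rescale (-a) (mk 1) := by
  have h : (1 + C a * X : k⟦X⟧) = rescale (-a) (1 - X) := by simp [rescale_X]
  refine ((eq_inv_iff_mul_eq_one (by simp)).2 ?_).symm
  rw [h, ← map_mul, mk_one_mul_one_sub_eq_one, map_one]

/-- Under `u ↦ u + a`, the variable `X = u⁻¹` becomes `(u + a)⁻¹ = X / (1 + a X)`. -/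
noncomputable def shiftX (a : ℂ) : ℂ⟦X⟧ := X * (1 + C a * X)⁻¹

lemma shiftX_mul_one_add_C_mul_X (a : ℂ) : shiftX a * (1 + C a * X) = X := by
  rw [shiftX, mul_assoc, PowerSeries.inv_mul_cancel _ (by simp), mul_one]

lemma constantCoeff_shiftX (a : ℂ) : constantCoeff (shiftX a) = 0 := by
  simp [shiftX]

lemma hasSubst_shiftX (a : ℂ) : HasSubst (shiftX a) :=
  HasSubst.of_constantCoeff_zero' (constantCoeff_shiftX a)

lemma coeff_shiftX_pow (a : ℂ) (d n : ℕ) :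
    coeff n (shiftX a ^ d) =
      if d ≤ n then (-a) ^ (n - d) * ((n - 1).choose (n - d) : ℂ) else 0 := by
  rw [shiftX, mul_pow, inv_one_add_C_mul_X, ← map_pow, coeff_X_pow_mul']
  split_ifs with h
  · rw [coeff_rescale]
    congr 1
    rcases d with _ | e
    · rcases n with _ | n <;> simp [coeff_one]
    · rw [mk_one_pow_eq_mk_choose_add, coeff_mk, Nat.cast_inj,
        show e + (n - (e + 1)) = n - 1 by omega]
      exact Nat.choose_symm_of_eq_add (by omega)
  · rfl

theorem shiftPS_eq_subst (a : ℂ) (f : ℂ⟦X⟧) : shiftPS a f = f.subst (shiftX a) := by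
  ext n
  rw [coeff_subst' (hasSubst_shiftX a), finsum_eq_sum_of_support_subset (s := range (n + 1))]
  · rw [shiftPS, coeff_mk]
    refine sum_congr rfl fun d hd => ?_
    rw [coeff_shiftX_pow, if_pos (mem_range_succ_iff.1 hd), smul_eq_mul, mul_assoc]
  · intro d hd
    rw [Function.mem_support, coeff_shiftX_pow] at hd
    simp only [coe_range, Set.mem_Iio]
    by_contra hdn
    exact hd (by rw [if_neg (by omega), smul_zero])

noncomputable def shiftAlgHom (a : ℂ) : ℂ⟦X⟧ →ₐ[ℂ] ℂ⟦X⟧ := substAlgHom (hasSubst_shiftX a)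

lemma shiftAlgHom_apply (a : ℂ) (f : ℂ⟦X⟧) : shiftAlgHom a f = shiftPS a f := by
  rw [shiftAlgHom, coe_substAlgHom, shiftPS_eq_subst]

lemma shiftPS_C (a r : ℂ) : shiftPS a (C r) = C r := by
  rw [← shiftAlgHom_apply, ← algebraMap_eq, AlgHom.commutes]

lemma shiftPS_X (a : ℂ) : shiftPS a X = shiftX a := by
  rw [shiftPS_eq_subst, subst_X (hasSubst_shiftX a)]

lemma shiftPS_shiftX (a b : ℂ) : shiftPS a (shiftX b) = shiftX (a + b) := by
  have hprod : (1 + C b * shiftX a) * (1 + C a * X) = 1 + C (a + b) * X := by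
    rw [map_add]
    linear_combination (C b) * shiftX_mul_one_add_C_mul_X a
  calc shiftPS a (shiftX b)
      = shiftX a * (1 + C b * shiftX a)⁻¹ := by
        rw [← shiftAlgHom_apply, shiftX, map_mul,
          PowerSeries.map_inv_of_constantCoeff_ne_zero _ (by simp)]
        simp only [map_add, map_one, map_mul, shiftAlgHom_apply, shiftPS_X, shiftPS_C]
    _ = X * ((1 + C b * shiftX a) * (1 + C a * X))⁻¹ := by
        rw [PowerSeries.mul_inv_rev, ← mul_assoc]
        rfl
    _ = shiftX (a + b) := by
        rw [hprod]
        rfl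

theorem shiftPS_shiftPS (a b : ℂ) (f : ℂ⟦X⟧) :
    shiftPS a (shiftPS b f) = shiftPS (a + b) f := by
  rw [shiftPS_eq_subst b, shiftPS_eq_subst, shiftPS_eq_subst,
    subst_comp_subst_apply (hasSubst_shiftX b) (hasSubst_shiftX a), ← shiftPS_eq_subst,
    shiftPS_shiftX]

lemma shiftPS_zero (f : ℂ⟦X⟧) : shiftPS 0 f = f := by
  rw [shiftPS_eq_subst, show shiftX 0 = X by simp [shiftX], ← map_algebraMap_eq_subst_X]
  rfl

lemma constantCoeff_shiftPS (a : ℂ) (f : ℂ⟦X⟧) :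
    constantCoeff (shiftPS a f) = constantCoeff f := by
  rw [← coeff_zero_eq_constantCoeff_apply, ← coeff_zero_eq_constantCoeff_apply, shiftPS, coeff_mk]
  simp

lemma coeff_succ_shiftPS_of_forall_lt (a : ℂ) {f : ℂ⟦X⟧} {m : ℕ}
    (hf : ∀ i < m, coeff i f = 0) :
    coeff (m + 1) (shiftPS a f) = coeff (m + 1) f - a * m * coeff m f := by
  rw [shiftPS, coeff_mk, sum_range_succ, sum_range_succ,
    sum_eq_zero fun i hi => by rw [hf i (mem_range.1 hi), zero_mul, zero_mul]]
  simp only [Nat.add_sub_cancel, Nat.sub_self, Nat.add_sub_cancel_left, Nat.choose_zero_right,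
    Nat.choose_one_right, pow_zero, pow_one]
  push_cast
  ring

theorem eq_zero_of_shiftPS_eq_mul_one_sub_X_sq {a : ℂ} (ha : a ≠ 0) {f : ℂ⟦X⟧}
    (hf : shiftPS a f = f * (1 - X ^ 2)) (hf0 : constantCoeff f = 0) : f = 0 := by
  by_contra hne
  set m := f.order.toNat
  have hcm : coeff m f ≠ 0 := coeff_order hne
  have hlt : ∀ i < m, coeff i f = 0 := fun i hi => coeff_of_lt_order_toNat i hi
  have hm : m ≠ 0 := by
    rintro h
    rw [h, coeff_zero_eq_constantCoeff_apply, hf0] at hcm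
    exact hcm rfl
  have hcoeff := congrArg (coeff (m + 1)) hf
  rw [coeff_succ_shiftPS_of_forall_lt a hlt, mul_sub, mul_one, map_sub,
    show m + 1 = (m - 1) + 2 by omega, coeff_mul_X_pow, hlt (m - 1) (by omega),
    show m - 1 + 2 = m + 1 by omega] at hcoeff
  have hvanish : a * m * coeff m f = 0 := by linear_combination -hcoeff
  exact hcm (by simpa [ha, hm] using hvanish)

lemma shiftPS_one_inv_one_sub_X : shiftPS 1 (1 - X)⁻¹ = (1 - X)⁻¹ * (1 - X ^ 2 : ℂ⟦X⟧) := by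
  have hshift : shiftPS 1 (1 - X)⁻¹ = 1 + X := by
    rw [← shiftAlgHom_apply, PowerSeries.map_inv_of_constantCoeff_ne_zero _ (by simp),
      PowerSeries.inv_eq_iff_mul_eq_one]
    · simp only [map_sub, map_one, shiftAlgHom_apply, shiftPS_X]
      linear_combination -(by simpa using shiftX_mul_one_add_C_mul_X 1 : shiftX 1 * (1 + X) = X)
    · simp [shiftAlgHom_apply, constantCoeff_shiftPS]
  have hinv : (1 - X : ℂ⟦X⟧)⁻¹ * (1 - X) = 1 := PowerSeries.inv_mul_cancel _ (by simp)
  rw [hshift]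
  linear_combination (-(1 + X)) * hinv

lemma shiftPS_one_prod_mul (g : ℂ⟦X⟧) (N : ℕ) :
    shiftPS 1 (∏ k ∈ range N, shiftPS k g) * g = (∏ k ∈ range N, shiftPS k g) * shiftPS N g := by
  rw [← prod_range_succ (fun k : ℕ => shiftPS k g), prod_range_succ', ← shiftAlgHom_apply,
    map_prod]
  simp only [shiftAlgHom_apply, shiftPS_shiftPS, Nat.cast_zero, shiftPS_zero, Nat.cast_succ,
    add_comm (1 : ℂ)]

theorem product_formula_g_general (N : ℕ) (g : PowerSeries ℂ)
    (hg0 : PowerSeries.constantCoeff g = 1)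
    (hg : shiftPS (N : ℂ) g = g * (1 - PowerSeries.X ^ 2)) :
    (∏ k ∈ Finset.range N, shiftPS (k : ℂ) g) = (1 - PowerSeries.X : PowerSeries ℂ)⁻¹ := by
  set P := ∏ k ∈ range N, shiftPS (k : ℂ) g
  have hg_ne : g ≠ 0 := by rintro rfl; simp at hg0
  have hP : shiftPS 1 P = P * (1 - X ^ 2) :=
    mul_right_cancel₀ hg_ne (by rw [shiftPS_one_prod_mul, hg]; ring)
  have hdiff : shiftPS 1 (P - (1 - X)⁻¹) = (P - (1 - X)⁻¹) * (1 - X ^ 2) := by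
    rw [← shiftAlgHom_apply, map_sub, shiftAlgHom_apply, shiftAlgHom_apply, hP,
      shiftPS_one_inv_one_sub_X, sub_mul]
  have hconst : constantCoeff (P - (1 - X)⁻¹) = 0 := by
    simp [P, map_prod, constantCoeff_shiftPS, hg0]
  exact sub_eq_zero.1 (eq_zero_of_shiftPS_eq_mul_one_sub_X_sq one_ne_zero hdiff hconst)

/-- Product formula: the unique `g(u) = 1 + ⋯` with `g(u+N) = g(u)(1-u^{-2})`
satisfies `g(u) g(u+1) ⋯ g(u+N-1) = (1-u^{-1})^{-1}`. -/
theorem product_formula_g (N : ℕ) (hN : 0 < N) (g : PowerSeries ℂ)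
    (hg0 : PowerSeries.constantCoeff g = 1)
    (hg : shiftPS (N : ℂ) g = g * (1 - PowerSeries.X ^ 2)) :
    (∏ k ∈ Finset.range N, shiftPS (k : ℂ) g) = (1 - PowerSeries.X : PowerSeries ℂ)⁻¹ :=
  product_formula_g_general N g hg0 hg
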